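/- arXiv:2307.03390 — 3 statements merged into one kernel-verified Lean document; each statement's English description precedes it below -/
import Mathlib

section
/- The symplectic Grassmannian SGr(q, ℂ^{2n}) of q-dimensional isotropic subspaces of (ℂ^{2n}, J), viewed inside the Grassmannian Gr(q, ℂ^{2n}) via its Plücker embedding into ℙ(Λ^q ℂ^{2n}), is the intersection of Gr(q, ℂ^{2n}) with a projective linear subspace, namely the projectivization of the kernel of the linear map μ : Λ^q ℂ^{2n} → Λ^{q-2} ℂ^{2n}. -/
/-!
Isotropic planes lie in `ker μ`, since every coefficient `J (u i) (u j)` of `μ (u₁ ∧ ⋯ ∧ u_q)`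
vanishes. Conversely, for linearly independent `u` the `(q-2)`-fold wedges of `u` omitting two
indices `i < j` are linearly independent (they are part of the standard basis of
`Λ^{q-2} (span u)`), so `μ (u₁ ∧ ⋯ ∧ u_q) = 0` forces `J (u i) (u j) = 0` for all `i < j`;
as `J` is alternating, it then vanishes on the whole span of `u`.
-/

open Module

/-- The order-preserving embedding `Fin (q-2) → Fin q` skipping the two indices `i < j`. -/
def skipTwo (q : ℕ) (i j : Fin q) (k : Fin (q - 2)) : Fin q :=
  ⟨if k.val < i.val then k.val else if k.val + 1 < j.val then k.val + 1 else k.val + 2, by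
    have hk := k.isLt; have hj := j.isLt; split_ifs <;> omega⟩

/-- The wedge `u₁ ∧ ⋯ ∧ u_q`, as an element of the `q`-th exterior power `⋀[ℂ]^q V`;
this is the (homogeneous-coordinate) Plücker embedding of the span of `u₁,…,u_q`. -/
def wedgeP (q : ℕ) {V : Type*} [AddCommGroup V] [Module ℂ V] (u : Fin q → V) :
    ⋀[ℂ]^q V :=
  ⟨ExteriorAlgebra.ιMulti ℂ q u, ExteriorAlgebra.ιMulti_range ℂ q ⟨u, rfl⟩⟩

open Submodule Set.powersetCard

lemma wedgeP_eq_ιMulti {V : Type*} [AddCommGroup V] [Module ℂ V] (q : ℕ) (u : Fin q → V) :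
    wedgeP q u = exteriorPower.ιMulti ℂ q u :=
  rfl

lemma skipTwo_strictMono (q : ℕ) (i j : Fin q) : StrictMono (skipTwo q i j) := by
  intro a b hab
  rw [Fin.lt_def] at hab ⊢
  simp only [skipTwo]
  split_ifs <;> omega

def skipTwoEmb (q : ℕ) (i j : Fin q) : Fin (q - 2) ↪o Fin q :=
  OrderEmbedding.ofStrictMono _ (skipTwo_strictMono q i j)

lemma range_skipTwo {q : ℕ} {i j : Fin q} (hij : i < j) :
    Set.range (skipTwo q i j) = {i, j}ᶜ := by
  rw [Fin.lt_def] at hij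
  ext l
  simp only [Set.mem_range, Set.mem_compl_iff, Set.mem_insert_iff, Set.mem_singleton_iff, not_or]
  constructor
  · rintro ⟨k, rfl⟩
    simp only [Fin.ext_iff, skipTwo]
    split_ifs <;> omega
  · rintro ⟨hli, hlj⟩
    rw [Fin.ext_iff] at hli hlj
    have hl := l.isLt
    refine ⟨⟨if l < i then l else if l < j then l - 1 else l - 2, by split_ifs <;> omega⟩, ?_⟩
    simp only [Fin.ext_iff, skipTwo]
    split_ifs <;> omega

lemma skipTwo_injOn (q : ℕ) :
    Set.InjOn (fun p : Fin q × Fin q => skipTwo q p.1 p.2) {p | p.1 < p.2} := by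
  rintro ⟨i, j⟩ (hij : i < j) ⟨i', j'⟩ (hij' : i' < j') h
  have hrange := congrArg Set.range h
  simp only [range_skipTwo hij, range_skipTwo hij', compl_inj_iff] at hrange
  rcases Set.pair_eq_pair_iff.1 hrange with ⟨rfl, rfl⟩ | ⟨rfl, rfl⟩
  · rfl
  · exact absurd hij' hij.not_gt

lemma linearIndepOn_ιMulti_comp_skipTwo {K E : Type*} [Field K] [AddCommGroup E] [Module K E]
    {q : ℕ} {u : Fin q → E} (hu : LinearIndependent K u) :
    LinearIndepOn K
      (fun p : Fin q × Fin q => exteriorPower.ιMulti K (q - 2) (u ∘ skipTwo q p.1 p.2))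
      {p | p.1 < p.2} := by
  have hfamily : (fun p : Fin q × Fin q => exteriorPower.ιMulti K (q - 2) (u ∘ skipTwo q p.1 p.2))
      = exteriorPower.ιMulti_family K (q - 2) u ∘
          fun p => ofFinEmbEquiv (skipTwoEmb q p.1 p.2) := by
    ext p
    simp [exteriorPower.ιMulti_family, skipTwoEmb]
  rw [hfamily]
  refine ((exteriorPower.ιMulti_family_linearIndependent_field (q - 2) hu).linearIndepOn _
    ).comp_of_image fun p hp p' hp' h => skipTwo_injOn q hp hp' ?_
  exact congrArg DFunLike.coe (ofFinEmbEquiv.injective h)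

lemma LinearMap.BilinForm.IsAlt.apply_eq_zero_of_mem_span {R M ι : Type*} [CommRing R]
    [AddCommGroup M] [Module R M] [LinearOrder ι] {B : LinearMap.BilinForm R M} (hB : B.IsAlt)
    {u : ι → M} (h : ∀ i j, i < j → B (u i) (u j) = 0) {v v' : M}
    (hv : v ∈ span R (Set.range u)) (hv' : v' ∈ span R (Set.range u)) : B v v' = 0 := by
  have hgen : ∀ i j, B (u i) (u j) = 0 := by
    intro i j
    rcases lt_trichotomy i j with hij | rfl | hji
    · exact h i j hij
    · exact hB.self_eq_zero _
    · rw [← hB.neg_eq, h j i hji, neg_zero]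
  simpa using LinearMap.BilinMap.apply_apply_mem_of_mem_span ⊥ _ _ B
    (by rintro _ ⟨i, rfl⟩ _ ⟨j, rfl⟩; simpa using hgen i j) v v' hv hv'

theorem stmt1_general (n q : ℕ)
    (J : LinearMap.BilinForm ℂ (Fin (2 * n) → ℂ))
    (hJalt : ∀ v, J v v = 0)
    (μ : (⋀[ℂ]^q (Fin (2 * n) → ℂ)) →ₗ[ℂ] (⋀[ℂ]^(q - 2) (Fin (2 * n) → ℂ)))
    (hμ : ∀ u : Fin q → (Fin (2 * n) → ℂ),
      μ (wedgeP q u) =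
        ∑ p ∈ Finset.univ.filter (fun p : Fin q × Fin q => p.1 < p.2),
          ((-1 : ℂ) ^ ((p.1 : ℕ) + (p.2 : ℕ) + 1) * J (u p.1) (u p.2)) •
            wedgeP (q - 2) (u ∘ skipTwo q p.1 p.2)) :
    {w : ⋀[ℂ]^q (Fin (2 * n) → ℂ) | ∃ u : Fin q → (Fin (2 * n) → ℂ),
        LinearIndependent ℂ u ∧ w = wedgeP q u ∧
        ∀ v ∈ Submodule.span ℂ (Set.range u), ∀ v' ∈ Submodule.span ℂ (Set.range u),
          J v v' = 0} =
      {w : ⋀[ℂ]^q (Fin (2 * n) → ℂ) | ∃ u : Fin q → (Fin (2 * n) → ℂ),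
        LinearIndependent ℂ u ∧ w = wedgeP q u} ∩ {w | μ w = 0} := by
  ext w
  simp only [Set.mem_inter_iff, Set.mem_ofPred_eq]
  constructor
  · rintro ⟨u, hu, rfl, hiso⟩
    refine ⟨⟨u, hu, rfl⟩, ?_⟩
    rw [hμ u]
    refine Finset.sum_eq_zero fun p _ => ?_
    rw [hiso _ (subset_span (Set.mem_range_self _)) _ (subset_span (Set.mem_range_self _)),
      mul_zero, zero_smul]
  · rintro ⟨⟨u, hu, rfl⟩, hker⟩
    refine ⟨u, hu, rfl, fun v hv v' hv' =>
      LinearMap.BilinForm.IsAlt.apply_eq_zero_of_mem_span hJalt (fun i j hij => ?_) hv hv'⟩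
    rw [hμ u] at hker
    simp only [wedgeP_eq_ιMulti] at hker
    have hcoeff := linearIndepOn_iff'.1 (linearIndepOn_ιMulti_comp_skipTwo hu) _ _
      (fun p hp => (Finset.mem_filter.1 hp).2) hker (i, j) (by simpa using hij)
    simpa using hcoeff

/-- The symplectic Grassmannian `SGr(q, ℂ^{2n})` of `q`-dimensional `J`-isotropic subspaces,
viewed inside `Gr(q, ℂ^{2n})` via the Plücker embedding into `ℙ(Λ^q ℂ^{2n})`, is the
intersection of the Grassmannian with the projective linear subspace `ℙ(ker μ)`, where
`μ : Λ^q ℂ^{2n} → Λ^{q-2} ℂ^{2n}` is the skew-symmetrized contraction by `J`.  Stated at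
the level of the affine cones of Plücker coordinate vectors. -/
theorem stmt1 (n q : ℕ) (hq1 : 2 ≤ q) (hq2 : q ≤ n)
    (J : LinearMap.BilinForm ℂ (Fin (2 * n) → ℂ))
    (hJalt : ∀ v, J v v = 0) (hJnd : J.Nondegenerate)
    (μ : (⋀[ℂ]^q (Fin (2 * n) → ℂ)) →ₗ[ℂ] (⋀[ℂ]^(q - 2) (Fin (2 * n) → ℂ)))
    (hμ : ∀ u : Fin q → (Fin (2 * n) → ℂ),
      μ (wedgeP q u) =
        ∑ p ∈ Finset.univ.filter (fun p : Fin q × Fin q => p.1 < p.2),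
          ((-1 : ℂ) ^ ((p.1 : ℕ) + (p.2 : ℕ) + 1) * J (u p.1) (u p.2)) •
            wedgeP (q - 2) (u ∘ skipTwo q p.1 p.2)) :
    {w : ⋀[ℂ]^q (Fin (2 * n) → ℂ) | ∃ u : Fin q → (Fin (2 * n) → ℂ),
        LinearIndependent ℂ u ∧ w = wedgeP q u ∧
        ∀ v ∈ Submodule.span ℂ (Set.range u), ∀ v' ∈ Submodule.span ℂ (Set.range u),
          J v v' = 0} =
      {w : ⋀[ℂ]^q (Fin (2 * n) → ℂ) | ∃ u : Fin q → (Fin (2 * n) → ℂ),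
        LinearIndependent ℂ u ∧ w = wedgeP q u} ∩ {w | μ w = 0} :=
  stmt1_general n q J hJalt μ hμ
end

section
/- Let P be the point (x;y;z) = (0; I_{n−r}; 0) in local Harish–Chandra coordinates on Gr(n−r, ℂ^{2n}), where x, z are r×(n−r) complex matrices and y is an (n−r)×(n−r) complex matrix, the locus SGr(n−r, ℂ^{2n}) is defined by y − yᵗ + xᵗz − zᵗx = 0, and the locus Σ_r is defined additionally by I_{n−r} + x*x − y*y − z*z = 0. Then at P, the real tangent space of Σ_r and the complex tangent space of SGr satisfy T_P SGr = T_P Σ_r + J(T_P Σ_r), where J is the complex structure; i.e., Σ_r is a generic CR submanifold of SGr(n−r, ℂ^{2n}) at P. -/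
open Matrix

/-!
A symmetric complex matrix `y` splits as `y = a + i b` with `a = (y - y*)/2` and
`b = -i (y + y*)/2`; symmetry of `y` is inherited by `y*`, hence by `a` and `b`, and the real
scalars `1/2` and the imaginary scalar `-i/2` make both parts skew-Hermitian. So every tangent
vector `(dx; dy; dz)` of `SGr` is `(dx; a; dz) + i (0; b; 0)` with both summands in `T_P Σ_r`;
conversely `T_P SGr` is a complex subspace containing `T_P Σ_r`.
-/

namespace Matrix

variable {m : Type*}

lemma conjTranspose_smul_sub_conjTranspose {c : ℂ} (hc : star c = c) (A : Matrix m m ℂ) :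
    (c • (A - Aᴴ))ᴴ = -(c • (A - Aᴴ)) := by
  rw [conjTranspose_smul, conjTranspose_sub, conjTranspose_conjTranspose, hc, ← smul_neg,
    neg_sub]

lemma conjTranspose_smul_add_conjTranspose {c : ℂ} (hc : star c = -c) (A : Matrix m m ℂ) :
    (c • (A + Aᴴ))ᴴ = -(c • (A + Aᴴ)) := by
  rw [conjTranspose_smul, conjTranspose_add, conjTranspose_conjTranspose, hc, neg_smul,
    add_comm]

lemma exists_isSymm_skewHermitian_add_I_smul {A : Matrix m m ℂ} (hA : A.IsSymm) :
    ∃ B C : Matrix m m ℂ, (B.IsSymm ∧ Bᴴ = -B) ∧ (C.IsSymm ∧ Cᴴ = -C) ∧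
      B + Complex.I • C = A := by
  refine ⟨(2⁻¹ : ℂ) • (A - Aᴴ), (-(2⁻¹ * Complex.I)) • (A + Aᴴ),
    ⟨(hA.sub hA.conjTranspose).smul _, conjTranspose_smul_sub_conjTranspose ?_ A⟩,
    ⟨(hA.add hA.conjTranspose).smul _, conjTranspose_smul_add_conjTranspose ?_ A⟩, ?_⟩
  · simp
  · simp [Complex.conj_I, mul_comm]
  · have hI : Complex.I * -(2⁻¹ * Complex.I) = 2⁻¹ := by
      rw [mul_neg, mul_left_comm, Complex.I_mul_I, mul_neg_one, neg_neg]
    rw [smul_smul, hI, ← smul_add, sub_add_add_cancel, ← two_smul ℂ A, smul_smul,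
      inv_mul_cancel₀ two_ne_zero, one_smul]

end Matrix

theorem stmt5_general (n r : ℕ)
    (TS TSig : Submodule ℝ (Matrix (Fin r) (Fin (n - r)) ℂ ×
      Matrix (Fin (n - r)) (Fin (n - r)) ℂ × Matrix (Fin r) (Fin (n - r)) ℂ))
    (hTS : ∀ w, w ∈ TS ↔ (w.2.1)ᵀ = w.2.1)
    (hTSig : ∀ w, w ∈ TSig ↔ (w.2.1)ᵀ = w.2.1 ∧ (w.2.1)ᴴ = -w.2.1) :
    TS = TSig ⊔ Submodule.map
      ((LinearMap.lsmul ℂ (Matrix (Fin r) (Fin (n - r)) ℂ ×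
        Matrix (Fin (n - r)) (Fin (n - r)) ℂ × Matrix (Fin r) (Fin (n - r)) ℂ)
        Complex.I).restrictScalars ℝ) TSig := by
  refine le_antisymm (fun w hw => ?_) (sup_le (fun w hw => ?_) ?_)
  · obtain ⟨a, b, ha, hb, hab⟩ := exists_isSymm_skewHermitian_add_I_smul ((hTS w).1 hw)
    refine Submodule.mem_sup.2 ⟨(w.1, a, w.2.2), (hTSig _).2 ha, Complex.I • (0, b, 0),
      Submodule.mem_map_of_mem ((hTSig (0, b, 0)).2 hb), ?_⟩
    simp [hab]
  · exact (hTS w).2 ((hTSig w).1 hw).1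
  · rintro _ ⟨v, hv, rfl⟩
    simp [hTS, ((hTSig v).1 hv).1]

/-- At the point `P = (0; I_{n−r}; 0)` of `SGr(n−r, ℂ^{2n})` in Harish–Chandra coordinates
`(x;y;z)`, the tangent space of `SGr` is `{dy = dyᵗ}` and the (real) tangent space of the
CR submanifold `Σ_r` is `{dy = dyᵗ, dy = −dy*}`; one has
`T_P SGr = T_P Σ_r + J(T_P Σ_r)` where `J` is multiplication by `i`, i.e. `Σ_r` is a
generic CR submanifold of `SGr(n−r, ℂ^{2n})` at `P`. -/
theorem stmt5 (n r : ℕ) (hr : 0 < r) (hrn : r < n)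
    (TS TSig : Submodule ℝ (Matrix (Fin r) (Fin (n - r)) ℂ ×
      Matrix (Fin (n - r)) (Fin (n - r)) ℂ × Matrix (Fin r) (Fin (n - r)) ℂ))
    (hTS : ∀ w, w ∈ TS ↔ (w.2.1)ᵀ = w.2.1)
    (hTSig : ∀ w, w ∈ TSig ↔ (w.2.1)ᵀ = w.2.1 ∧ (w.2.1)ᴴ = -w.2.1) :
    TS = TSig ⊔ Submodule.map
      ((LinearMap.lsmul ℂ (Matrix (Fin r) (Fin (n - r)) ℂ ×
        Matrix (Fin (n - r)) (Fin (n - r)) ℂ × Matrix (Fin r) (Fin (n - r)) ℂ)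
        Complex.I).restrictScalars ℝ) TSig :=
  stmt5_general n r TS TSig hTS hTSig
end

section
/- Let U₀* be a q-dimensional complex vector space and Q₀ a 2(n−q)-dimensional complex vector space with 2 ≤ q < n. Consider the cone C = { λ⊗μ + λ⊙λ : λ ∈ U₀* \ {0}, μ ∈ Q₀ } ∪ {0} inside (U₀* ⊗ Q₀) ⊕ S²U₀*. Then the projectivization of C, namely ℂ(X) := ℙ(C \ {0}), contains the Segre variety ℙU₀* × ℙQ₀ (embedded via [λ]×[μ] ↦ [λ⊗μ]) in its topological closure, and the closure of ℂ(X) equals ℂ(X) ∪ (Segre variety). -/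
/-!
A point `(λ⊗μ, λ⊙λ)` of the cone satisfies closed quadratic equations: the `2 × 2` minors of the
block matrix `(A | B)` vanish and `B` is symmetric. Conversely, on that locus a point with
`B ≠ 0` has a nonzero diagonal entry `B j j`, and dividing the `j`-th columns of `A` and `B` by a
square root of `B j j` recovers `μ` and `λ`; the points with `B = 0` are the Segre points.
Finally `(λ⊗μ, c² λ⊙λ) = ((cλ)⊗(c⁻¹μ), (cλ)⊙(cλ))` lies on the cone for `c ≠ 0` and tends to
the Segre point `(λ⊗μ, 0)` as `c → 0`.
-/

open Matrix Filter Topology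

namespace SymplecticVMRT

variable {ι κ 𝕜 : Type*}

section Algebra

variable [Field 𝕜]

variable (ι κ 𝕜) in
def cone : Set (Matrix ι κ 𝕜 × Matrix ι ι 𝕜) :=
  {w | w = 0 ∨ ∃ l : ι → 𝕜, l ≠ 0 ∧ ∃ μ : κ → 𝕜, w = (vecMulVec l μ, vecMulVec l l)}

variable (ι κ 𝕜) in
def segre : Set (Matrix ι κ 𝕜 × Matrix ι ι 𝕜) :=
  {w | ∃ (l : ι → 𝕜) (μ : κ → 𝕜), w = (vecMulVec l μ, 0)}

variable (ι κ 𝕜) in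
def minorLocus : Set (Matrix ι κ 𝕜 × Matrix ι ι 𝕜) :=
  {w | (∀ i i' j j', w.1 i j * w.1 i' j' = w.1 i j' * w.1 i' j) ∧
    (∀ i i' j j', w.1 i j * w.2 i' j' = w.1 i' j * w.2 i j') ∧
    (∀ i i' j j', w.2 i j * w.2 i' j' = w.2 i j' * w.2 i' j) ∧
    ∀ i j, w.2 i j = w.2 j i}

theorem vecMulVec_mem_cone (l : ι → 𝕜) (μ : κ → 𝕜) :
    (vecMulVec l μ, vecMulVec l l) ∈ cone ι κ 𝕜 := by
  rcases eq_or_ne l 0 with rfl | hl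
  · left; simp
  · exact Or.inr ⟨l, hl, μ, rfl⟩

theorem cone_subset_minorLocus : cone ι κ 𝕜 ⊆ minorLocus ι κ 𝕜 := by
  rintro w (rfl | ⟨l, -, μ, rfl⟩)
  · simp [minorLocus]
  · refine ⟨?_, ?_, ?_, ?_⟩ <;> intros <;> simp only [vecMulVec_apply] <;> ring

theorem exists_eq_vecMulVec_of_minors_eq {A : Matrix ι κ 𝕜}
    (hA : ∀ i i' j j', A i j * A i' j' = A i j' * A i' j) :
    ∃ (l : ι → 𝕜) (μ : κ → 𝕜), A = vecMulVec l μ := by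
  by_cases h : A = 0
  · exact ⟨0, 0, by simp [h]⟩
  obtain ⟨i₀, j₀, hij⟩ : ∃ i₀ j₀, A i₀ j₀ ≠ 0 := by
    by_contra! h'
    exact h (Matrix.ext h')
  refine ⟨fun i => A i j₀, fun j => A i₀ j / A i₀ j₀, Matrix.ext fun i j => ?_⟩
  rw [vecMulVec_apply, mul_div_assoc', eq_div_iff hij]
  linear_combination -hA i i₀ j₀ j

theorem exists_diag_ne_zero_of_minors_eq {B : Matrix ι ι 𝕜} (hB : B ≠ 0)
    (hminor : ∀ i i' j j', B i j * B i' j' = B i j' * B i' j) (hsymm : ∀ i j, B i j = B j i) :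
    ∃ j, B j j ≠ 0 := by
  obtain ⟨i, j, hij⟩ : ∃ i j, B i j ≠ 0 := by
    by_contra! h
    exact hB (Matrix.ext h)
  refine ⟨j, fun hj => hij ?_⟩
  have := hminor i j j i
  rw [← hsymm i j, hj, mul_zero] at this
  exact mul_self_eq_zero.mp this

theorem minorLocus_subset_cone_union_segre [IsAlgClosed 𝕜] :
    minorLocus ι κ 𝕜 ⊆ cone ι κ 𝕜 ∪ segre ι κ 𝕜 := by
  rintro ⟨A, B⟩ ⟨hA, hAB, hB, hsymm⟩
  rcases eq_or_ne B 0 with rfl | hB0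
  · obtain ⟨l, μ, rfl⟩ := exists_eq_vecMulVec_of_minors_eq hA
    exact Or.inr ⟨l, μ, rfl⟩
  obtain ⟨j₀, hj₀⟩ := exists_diag_ne_zero_of_minors_eq hB0 hB hsymm
  obtain ⟨s, hs⟩ := IsAlgClosed.exists_pow_nat_eq (B j₀ j₀) two_pos
  have hs0 : s ≠ 0 := by rintro rfl; exact hj₀ (by simp [← hs])
  refine Or.inl (Or.inr ⟨fun i => B i j₀ / s, fun h => hj₀ ?_, fun j => A j₀ j / s, ?_⟩)
  · simpa [hs0] using congrFun h j₀
  refine Prod.ext (Matrix.ext fun i j => ?_) (Matrix.ext fun i j => ?_) <;> dsimp only <;>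
    rw [vecMulVec_apply, div_mul_div_comm, eq_div_iff (mul_ne_zero hs0 hs0)]
  · linear_combination hAB i j₀ j j₀ + A i j * hs
  · linear_combination hB i j₀ j j₀ + B i j₀ * hsymm j₀ j + B i j * hs

end Algebra

section Topology

variable [NontriviallyNormedField 𝕜]

theorem isClosed_minorLocus : IsClosed (minorLocus ι κ 𝕜) := by
  have hA : ∀ i j, Continuous fun w : Matrix ι κ 𝕜 × Matrix ι ι 𝕜 => w.1 i j :=
    fun i j => continuous_fst.matrix_elem i j
  have hB : ∀ i j, Continuous fun w : Matrix ι κ 𝕜 × Matrix ι ι 𝕜 => w.2 i j :=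
    fun i j => continuous_snd.matrix_elem i j
  simp only [minorLocus, Set.ofPred_and, Set.ofPred_forall]
  refine .inter ?_ (.inter ?_ (.inter ?_ ?_)) <;>
    refine isClosed_iInter fun i => isClosed_iInter fun i' => ?_
  · exact isClosed_iInter fun j => isClosed_iInter fun j' =>
      isClosed_eq ((hA i j).mul (hA i' j')) ((hA i j').mul (hA i' j))
  · exact isClosed_iInter fun j => isClosed_iInter fun j' =>
      isClosed_eq ((hA i j).mul (hB i' j')) ((hA i' j).mul (hB i j'))
  · exact isClosed_iInter fun j => isClosed_iInter fun j' =>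
      isClosed_eq ((hB i j).mul (hB i' j')) ((hB i j').mul (hB i' j))
  · exact isClosed_eq (hB i i') (hB i' i)

theorem segre_subset_closure_cone : segre ι κ 𝕜 ⊆ closure (cone ι κ 𝕜) := by
  rintro _ ⟨l, μ, rfl⟩
  have hlim : Tendsto (fun c : 𝕜 => (vecMulVec l μ, c ^ 2 • vecMulVec l l)) (𝓝[≠] 0)
      (𝓝 (vecMulVec l μ, 0)) := by
    refine tendsto_const_nhds.prodMk_nhds ?_
    exact (((continuous_pow 2).smul continuous_const).tendsto' (0 : 𝕜) 0 (by simp)).mono_left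
      nhdsWithin_le_nhds
  refine mem_closure_of_tendsto hlim (eventually_nhdsWithin_of_forall fun c (hc : c ≠ 0) => ?_)
  convert vecMulVec_mem_cone (c • l) (c⁻¹ • μ) using 2
  · rw [smul_vecMulVec, vecMulVec_smul, smul_smul, mul_inv_cancel₀ hc, one_smul]
  · rw [smul_vecMulVec, vecMulVec_smul, smul_smul, sq]

theorem closure_cone [IsAlgClosed 𝕜] : closure (cone ι κ 𝕜) = cone ι κ 𝕜 ∪ segre ι κ 𝕜 :=
  (closure_minimal cone_subset_minorLocus isClosed_minorLocus).trans
    minorLocus_subset_cone_union_segre |>.antisymm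
    (Set.union_subset subset_closure segre_subset_closure_cone)

end Topology

end SymplecticVMRT

open SymplecticVMRT in
theorem stmt10_general (n q : ℕ)
    (C : Set (Matrix (Fin q) (Fin (2 * (n - q))) ℂ × Matrix (Fin q) (Fin q) ℂ))
    (hC : C = {w | w = 0 ∨ ∃ l : Fin q → ℂ, l ≠ 0 ∧ ∃ μ : Fin (2 * (n - q)) → ℂ,
        w = (Matrix.vecMulVec l μ, Matrix.vecMulVec l l)}) :
    (∀ (l : Fin q → ℂ) (μ : Fin (2 * (n - q)) → ℂ),
        (Matrix.vecMulVec l μ, (0 : Matrix (Fin q) (Fin q) ℂ)) ∈ closure C) ∧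
      closure C = C ∪ {w | ∃ (l : Fin q → ℂ) (μ : Fin (2 * (n - q)) → ℂ),
        w = (Matrix.vecMulVec l μ, 0)} := by
  subst hC
  exact ⟨fun l μ => segre_subset_closure_cone ⟨l, μ, rfl⟩, closure_cone⟩

/-- Model of the VMRT cone of the symplectic Grassmannian: with `U₀*` of dimension `q` and
`Q₀` of dimension `2(n−q)` (`2 ≤ q < n`), `λ⊗μ` and `λ⊙λ` realized as the rank-one matrices
`vecMulVec l μ` and `vecMulVec l l`, the cone
`C = { (λ⊗μ, λ⊙λ) : λ ≠ 0, μ } ∪ {0}` in `(U₀*⊗Q₀) ⊕ S²U₀*` has topological closure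
`C ∪ { (λ⊗μ, 0) }`; in particular the Segre points `(λ⊗μ, 0)` all lie in the closure of `C`. -/
theorem stmt10 (n q : ℕ) (hq : 2 ≤ q) (hqn : q < n)
    (C : Set (Matrix (Fin q) (Fin (2 * (n - q))) ℂ × Matrix (Fin q) (Fin q) ℂ))
    (hC : C = {w | w = 0 ∨ ∃ l : Fin q → ℂ, l ≠ 0 ∧ ∃ μ : Fin (2 * (n - q)) → ℂ,
        w = (Matrix.vecMulVec l μ, Matrix.vecMulVec l l)}) :
    (∀ (l : Fin q → ℂ) (μ : Fin (2 * (n - q)) → ℂ),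
        (Matrix.vecMulVec l μ, (0 : Matrix (Fin q) (Fin q) ℂ)) ∈ closure C) ∧
      closure C = C ∪ {w | ∃ (l : Fin q → ℂ) (μ : Fin (2 * (n - q)) → ℂ),
        w = (Matrix.vecMulVec l μ, 0)} :=
  stmt10_general n q C hC
end
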